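/- Entropy inequality plus subgaussian bound yields the replacement estimate: let ν be a product Bernoulli measure on {0,1}^{kn} with marginals ρ(m(x)) ∈ (ε₀,1−ε₀) constant on boxes of size n, let μ be any probability measure, and G : ℤ/kℤ → ℝ. Then |E_μ[ (1/(kn)) ∑_{i=0}^{k−1} ∑_{x=in}^{(i+1)n−1} (η(x) − ρ(i)) G(i/k) ]| ≤ (C(G)+1) √( H(μ|ν)/(kn) ). -/

import Mathlib

open MeasureTheory

/-- The Bernoulli measure on `Bool` with parameter `p`. -/
noncomputable def bern (p : ℝ) : Measure Bool :=
  (ENNReal.ofReal p) • Measure.dirac true + (ENNReal.ofReal (1 - p)) • Measure.dirac false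

/-- Relative entropy `H(μ|ν) = ∑_η μ(η) log (μ(η)/ν(η))` on a finite configuration space.
Sites are indexed by box `i ∈ Fin k` and position `j ∈ Fin n` inside the box. -/
noncomputable def relEnt {Λ : Type*} [Fintype Λ] [DecidableEq Λ]
    (μ ν : Measure (Λ → Bool)) : ℝ :=
  ∑ η : Λ → Bool, (μ {η}).toReal * Real.log ((μ {η}).toReal / (ν {η}).toReal)

open Finset

/-- Finite-space entropy (Donsker–Varadhan / Gibbs) inequality. -/
lemma entropy_ineq {S : Type*} [Fintype S] (p q f : S → ℝ)
    (hp : ∀ s, 0 ≤ p s) (hp1 : ∑ s, p s = 1) (hq : ∀ s, 0 < q s) :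
    ∑ s, p s * f s ≤ (∑ s, p s * Real.log (p s / q s))
      + Real.log (∑ s, q s * Real.exp (f s)) := by
  classical
  set T : Finset S := Finset.univ.filter (fun s => 0 < p s) with hT
  have hmemT : ∀ s ∈ T, 0 < p s := fun s hs => (Finset.mem_filter.mp hs).2
  have hzero : ∀ s ∈ (Finset.univ : Finset S), s ∉ T → p s = 0 := by
    intro s _ hs
    have : ¬ 0 < p s := fun h => hs (Finset.mem_filter.mpr ⟨Finset.mem_univ s, h⟩)
    linarith [hp s, this]
  have hpT : ∑ s ∈ T, p s = 1 := by
    rw [← hp1]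
    exact Finset.sum_subset (Finset.subset_univ T) (fun s hs h => hzero s hs h)
  -- rewrite both sums over T
  have h1 : ∑ s, p s * f s = ∑ s ∈ T, p s * f s := by
    refine (Finset.sum_subset (Finset.subset_univ T) ?_).symm
    intro s hs h; rw [hzero s hs h, zero_mul]
  have h2 : ∑ s, p s * Real.log (p s / q s) = ∑ s ∈ T, p s * Real.log (p s / q s) := by
    refine (Finset.sum_subset (Finset.subset_univ T) ?_).symm
    intro s hs h; rw [hzero s hs h, zero_mul]
  rw [h1, h2]
  have key : ∑ s ∈ T, p s * (f s - Real.log (p s / q s))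
      ≤ Real.log (∑ s ∈ T, q s * Real.exp (f s)) := by
    have hjen := (strictConcaveOn_log_Ioi.concaveOn).le_map_sum
      (t := T) (w := p) (p := fun s => Real.exp (f s) * q s / p s)
      (fun s hs => (hmemT s hs).le) hpT
      (fun s hs => Set.mem_Ioi.mpr
        (div_pos (mul_pos (Real.exp_pos _) (hq s)) (hmemT s hs)))
    simp only [smul_eq_mul] at hjen
    have harg : ∑ s ∈ T, p s * (Real.exp (f s) * q s / p s) = ∑ s ∈ T, q s * Real.exp (f s) := by
      refine Finset.sum_congr rfl fun s hs => ?_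
      have hps : p s ≠ 0 := ne_of_gt (hmemT s hs)
      field_simp
    have hlogeq : ∀ s ∈ T, p s * Real.log (Real.exp (f s) * q s / p s)
        = p s * (f s - Real.log (p s / q s)) := by
      intro s hs
      have hps := hmemT s hs
      have hqs := hq s
      congr 1
      rw [Real.log_div (by positivity) (ne_of_gt hps),
        Real.log_mul (by positivity) (ne_of_gt hqs), Real.log_exp,
        Real.log_div (ne_of_gt hps) (ne_of_gt hqs)]
      ring
    rw [harg, Finset.sum_congr rfl hlogeq] at hjen
    exact hjen
  have hTsub : ∑ s ∈ T, q s * Real.exp (f s) ≤ ∑ s, q s * Real.exp (f s) := by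
    refine Finset.sum_le_sum_of_subset_of_nonneg (Finset.subset_univ T) ?_
    intro s _ _; exact le_of_lt (mul_pos (hq s) (Real.exp_pos _))
  have hTne : T.Nonempty := by
    by_contra h
    rw [Finset.not_nonempty_iff_eq_empty] at h
    rw [h, Finset.sum_empty] at hpT
    norm_num at hpT
  have hTpos : 0 < ∑ s ∈ T, q s * Real.exp (f s) := by
    obtain ⟨s, hs⟩ := hTne
    refine Finset.sum_pos (fun s _ => mul_pos (hq s) (Real.exp_pos _)) ⟨s, hs⟩
  calc ∑ s ∈ T, p s * f s
      = ∑ s ∈ T, p s * Real.log (p s / q s) + ∑ s ∈ T, p s * (f s - Real.log (p s / q s)) := by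
        rw [← Finset.sum_add_distrib]; refine Finset.sum_congr rfl fun s _ => by ring
    _ ≤ ∑ s ∈ T, p s * Real.log (p s / q s) + Real.log (∑ s ∈ T, q s * Real.exp (f s)) := by
        linarith [key]
    _ ≤ ∑ s ∈ T, p s * Real.log (p s / q s) + Real.log (∑ s, q s * Real.exp (f s)) := by
        have := Real.log_le_log hTpos hTsub
        linarith

/-- Bernoulli MGF bound (Hoeffding with constant 1/2 via cosh). -/
lemma bern_mgf (r t : ℝ) (hr0 : 0 ≤ r) (hr1 : r ≤ 1) :
    r * Real.exp (t * (1 - r)) + (1 - r) * Real.exp (t * (0 - r)) ≤ Real.exp (t ^ 2 / 2) := by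
  have hcosh := Real.cosh_le_exp_half_sq t
  have h1 : Real.exp (t * (1 - r)) ≤ (1 - r/2) * Real.exp t + (r/2) * Real.exp (-t) := by
    have := convexOn_exp.2 (Set.mem_univ t) (Set.mem_univ (-t))
      (by linarith : (0:ℝ) ≤ 1 - r/2) (by linarith : (0:ℝ) ≤ r/2) (by ring)
    simp only [smul_eq_mul] at this
    convert this using 2
    case e'_2 => rfl
    ring
  have h2 : Real.exp (t * (0 - r)) ≤ ((1-r)/2) * Real.exp t + ((1+r)/2) * Real.exp (-t) := by
    have := convexOn_exp.2 (Set.mem_univ t) (Set.mem_univ (-t))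
      (by linarith : (0:ℝ) ≤ (1-r)/2) (by linarith : (0:ℝ) ≤ (1+r)/2) (by ring)
    simp only [smul_eq_mul] at this
    convert this using 2
    case e'_2 => rfl
    ring
  have hcosheq : Real.cosh t = (Real.exp t + Real.exp (-t)) / 2 := Real.cosh_eq t
  nlinarith [Real.exp_pos t, Real.exp_pos (-t), mul_le_mul_of_nonneg_left h1 hr0,
    mul_le_mul_of_nonneg_left h2 (by linarith : (0:ℝ) ≤ 1 - r)]

/-- One-sided bound via entropy inequality and optimization over `γ`. -/
lemma one_sided {S : Type*} [Fintype S] (p q X : S → ℝ)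
    (hp : ∀ s, 0 ≤ p s) (hp1 : ∑ s, p s = 1) (hq : ∀ s, 0 < q s) (hq1 : ∑ s, q s = 1)
    (K : ℝ) (hK : 0 ≤ K)
    (hmgf : ∀ γ : ℝ, 0 < γ → ∑ s, q s * Real.exp (γ * X s) ≤ Real.exp (γ ^ 2 * K)) :
    ∑ s, p s * X s ≤ 2 * Real.sqrt ((∑ s, p s * Real.log (p s / q s)) * K) := by
  set H := ∑ s, p s * Real.log (p s / q s) with hHdef
  set S₀ := ∑ s, p s * X s with hS₀
  have hne : (Finset.univ : Finset S).Nonempty := by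
    by_contra h
    rw [Finset.not_nonempty_iff_eq_empty] at h
    rw [h, Finset.sum_empty] at hq1
    norm_num at hq1
  have hH : 0 ≤ H := by
    have h0 := entropy_ineq p q (fun _ => 0) hp hp1 hq
    simp only [mul_zero, Finset.sum_const_zero, Real.exp_zero, mul_one, hq1,
      Real.log_one, add_zero] at h0
    exact h0
  have hγb : ∀ γ : ℝ, 0 < γ → γ * S₀ ≤ H + γ ^ 2 * K := by
    intro γ hγ
    have h0 := entropy_ineq p q (fun s => γ * X s) hp hp1 hq
    have hl : ∑ s, p s * (γ * X s) = γ * S₀ := by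
      rw [hS₀, Finset.mul_sum]; exact Finset.sum_congr rfl fun s _ => by ring
    have hpos : 0 < ∑ s, q s * Real.exp (γ * X s) :=
      Finset.sum_pos (fun s _ => mul_pos (hq s) (Real.exp_pos _)) hne
    have hlog := Real.log_le_log hpos (hmgf γ hγ)
    rw [Real.log_exp] at hlog
    rw [hl] at h0
    linarith
  rcases le_or_gt S₀ 0 with h | hS₀pos
  · have : 0 ≤ Real.sqrt (H * K) := Real.sqrt_nonneg _
    linarith
  have hKpos : 0 < K := by
    rcases hK.lt_or_eq with h | h
    · exact h
    · exfalso
      have hγ : 0 < (H + 1) / S₀ := div_pos (by linarith) hS₀pos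
      have := hγb _ hγ
      rw [div_mul_cancel₀ _ (ne_of_gt hS₀pos), ← h] at this
      nlinarith
  have hHpos : 0 < H := by
    rcases hH.lt_or_eq with h | h
    · exact h
    · exfalso
      have hγ : 0 < S₀ / (2 * K) := div_pos hS₀pos (by linarith)
      have hb := hγb _ hγ
      rw [← h] at hb
      have h2K : (0:ℝ) < 2 * K := by positivity
      rw [zero_add, div_mul_eq_mul_div, div_pow, div_mul_eq_mul_div,
        div_le_div_iff₀ h2K (by positivity)] at hb
      nlinarith [mul_pos hKpos (mul_pos hS₀pos hS₀pos)]
  have hsH : Real.sqrt H * Real.sqrt H = H := Real.mul_self_sqrt hH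
  have hsK : Real.sqrt K * Real.sqrt K = K := Real.mul_self_sqrt hK
  have hsHpos : 0 < Real.sqrt H := Real.sqrt_pos.mpr hHpos
  have hsKpos : 0 < Real.sqrt K := Real.sqrt_pos.mpr hKpos
  have hγ : 0 < Real.sqrt H / Real.sqrt K := div_pos hsHpos hsKpos
  have hb := hγb _ hγ
  have hb2 : (Real.sqrt H / Real.sqrt K) ^ 2 * K = H := by
    rw [div_pow]
    have : Real.sqrt K ^ 2 = K := by rw [sq]; exact hsK
    rw [this]
    have : Real.sqrt H ^ 2 = H := by rw [sq]; exact hsH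
    rw [this]
    field_simp
  rw [hb2] at hb
  rw [Real.sqrt_mul hH]
  have hb3 : Real.sqrt H * S₀ ≤ 2 * H * Real.sqrt K := by
    have := mul_le_mul_of_nonneg_left hb hsKpos.le
    rw [mul_comm] at this
    calc Real.sqrt H * S₀ = Real.sqrt H / Real.sqrt K * S₀ * Real.sqrt K := by
          field_simp
      _ ≤ 2 * H * Real.sqrt K := by nlinarith
  nlinarith [hb3]

lemma bern_singleton (r : ℝ) (h0 : 0 ≤ r) (h1 : r ≤ 1) (b : Bool) :
    ((bern r) {b}).toReal = if b then r else 1 - r := by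
  cases b <;>
    simp [bern, Measure.dirac_apply, ENNReal.toReal_ofReal, h0, sub_nonneg.mpr h1]

lemma bern_prob (r : ℝ) (h0 : 0 ≤ r) (h1 : r ≤ 1) : IsProbabilityMeasure (bern r) := by
  constructor
  simp only [bern, Measure.coe_add, Measure.coe_smul, Pi.add_apply, Pi.smul_apply,
    Measure.dirac_apply, smul_eq_mul]
  rw [Set.indicator_of_mem (Set.mem_univ _) 1, Set.indicator_of_mem (Set.mem_univ _) 1]
  simp only [Pi.one_apply, mul_one]
  rw [← ENNReal.ofReal_add h0 (by linarith), ENNReal.ofReal_eq_one]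
  ring

set_option maxHeartbeats 1000000 in
/-- Replacement estimate via the entropy inequality and subgaussian concentration:
for the product Bernoulli reference measure `ν` with box-wise constant marginals
`ρ(i) ∈ (ε₀, 1-ε₀)` and any probability measure `μ`,
`|E_μ[(1/(kn)) ∑ᵢ ∑_{x∈box i} (η(x) - ρ(i)) G(i)]| ≤ (C(G)+1) √(H(μ|ν)/(kn))`,
where `C` depends only on `‖G‖_∞`. -/
theorem replacement_estimate_entropy (ε₀ : ℝ) (hε₀ : ε₀ ∈ Set.Ioo (0 : ℝ) (1 / 2))
    (M : ℝ) (hM : 0 ≤ M) :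
    ∃ C : ℝ, 0 ≤ C ∧
      ∀ (n k : ℕ), 1 ≤ n → 1 ≤ k →
        ∀ (G : Fin k → ℝ), (∀ i, |G i| ≤ M) →
          ∀ (ρ : Fin k → ℝ), (∀ i, ρ i ∈ Set.Ioo ε₀ (1 - ε₀)) →
            ∀ (μ : Measure ((Fin k × Fin n) → Bool)), IsProbabilityMeasure μ →
              |∫ η, (1 / ((k : ℝ) * n)) *
                  ∑ i : Fin k, ∑ j : Fin n,
                    (((if η (i, j) then 1 else 0) : ℝ) - ρ i) * G i ∂μ|
                ≤ (C + 1) *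
                    Real.sqrt
                      (relEnt μ (Measure.pi fun p : Fin k × Fin n => bern (ρ p.1))
                        / ((k : ℝ) * n)) := by
  classical
  obtain ⟨hε₀pos, hε₀half⟩ := hε₀
  refine ⟨2 * M, by linarith, ?_⟩
  intro n k hn hk G hG ρ hρ μ hμ
  have hρ0 : ∀ i, 0 ≤ ρ i := fun i => le_of_lt (lt_trans hε₀pos (hρ i).1)
  have hρ0' : ∀ i, 0 < ρ i := fun i => lt_trans hε₀pos (hρ i).1
  have hρ1' : ∀ i, ρ i < 1 := fun i => lt_of_lt_of_le (hρ i).2 (by linarith)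
  have hρ1 : ∀ i, ρ i ≤ 1 := fun i => (hρ1' i).le
  set ν := Measure.pi fun s : Fin k × Fin n => bern (ρ s.1) with hν
  haveI hbp : ∀ s : Fin k × Fin n, IsProbabilityMeasure (bern (ρ s.1)) :=
    fun s => bern_prob _ (hρ0 _) (hρ1 _)
  haveI : IsProbabilityMeasure ν := by rw [hν]; infer_instance
  set N : ℝ := (k : ℝ) * n with hNdef
  have hNpos : 0 < N := by
    have h1 : (1:ℝ) ≤ (k:ℝ) := by exact_mod_cast hk
    have h2 : (1:ℝ) ≤ (n:ℝ) := by exact_mod_cast hn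
    rw [hNdef]; nlinarith
  set p : ((Fin k × Fin n) → Bool) → ℝ := fun η => (μ {η}).toReal with hpdef
  set q : ((Fin k × Fin n) → Bool) → ℝ := fun η => (ν {η}).toReal with hqdef
  have hqf : ∀ η, q η = ∏ s : Fin k × Fin n, (if η s then ρ s.1 else 1 - ρ s.1) := by
    intro η
    have hsing : ({η} : Set ((Fin k × Fin n) → Bool)) = Set.pi Set.univ fun s => {η s} :=
      (Set.univ_pi_singleton η).symm
    rw [hqdef]
    simp only []
    rw [hsing, hν, Measure.pi_pi, ENNReal.toReal_prod]
    exact Finset.prod_congr rfl fun s _ => bern_singleton _ (hρ0 _) (hρ1 _) (η s)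
  have hqpos : ∀ η, 0 < q η := by
    intro η
    rw [hqf]
    refine Finset.prod_pos fun s _ => ?_
    by_cases h : η s <;> simp [h]
    · exact hρ0' s.1
    · linarith [hρ1' s.1]
  have sum_one : ∀ (m : Measure ((Fin k × Fin n) → Bool)), IsProbabilityMeasure m →
      ∑ η, ((m {η}).toReal) = 1 := by
    intro m hm
    have h := integral_fintype (μ := m) (f := fun _ => (1:ℝ)) Integrable.of_finite
    rw [MeasureTheory.integral_const] at h
    simp only [measure_univ, probReal_univ, ENNReal.toReal_one, one_smul, smul_eq_mul, mul_one] at h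
    exact h.symm
  have hpnn : ∀ η, 0 ≤ p η := fun η => ENNReal.toReal_nonneg
  have hp1 : ∑ η, p η = 1 := sum_one μ hμ
  have hq1 : ∑ η, q η = 1 := sum_one ν inferInstance
  set Y : (Fin k → ℝ) → ((Fin k × Fin n) → Bool) → ℝ :=
    fun G' η => ∑ s : Fin k × Fin n, (((if η s then 1 else 0) : ℝ) - ρ s.1) * G' s.1 with hYdef
  set K : ℝ := N * M ^ 2 / 2 with hKdef
  have hKnn : 0 ≤ K := by rw [hKdef]; positivity
  have hmgf : ∀ (G' : Fin k → ℝ), (∀ i, |G' i| ≤ M) → ∀ γ : ℝ, 0 < γ →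
      ∑ η, q η * Real.exp (γ * Y G' η) ≤ Real.exp (γ ^ 2 * K) := by
    intro G' hG' γ hγ
    set g : (Fin k × Fin n) → Bool → ℝ := fun s b =>
      (if b then ρ s.1 else 1 - ρ s.1)
        * Real.exp (γ * ((((if b then 1 else 0) : ℝ) - ρ s.1) * G' s.1)) with hgdef
    have step1 : ∀ η, q η * Real.exp (γ * Y G' η) = ∏ s : Fin k × Fin n, g s (η s) := by
      intro η
      rw [hqf η, hYdef]
      simp only []
      rw [Finset.mul_sum, Real.exp_sum, ← Finset.prod_mul_distrib]
    have step2 : ∑ η : (Fin k × Fin n) → Bool, ∏ s, g s (η s)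
        = ∏ s, ∑ b : Bool, g s b := by
      have h := Finset.prod_univ_sum (fun _ : Fin k × Fin n => (Finset.univ : Finset Bool)) g
      rw [Fintype.piFinset_univ] at h
      exact h.symm
    have step3 : ∀ s : Fin k × Fin n, ∑ b : Bool, g s b ≤ Real.exp (γ ^ 2 * M ^ 2 / 2) := by
      intro s
      rw [Fintype.sum_bool]
      have hb := bern_mgf (ρ s.1) (γ * G' s.1) (hρ0 _) (hρ1 _)
      have e1 : γ * ((((1:ℝ)) - ρ s.1) * G' s.1) = (γ * G' s.1) * (1 - ρ s.1) := by ring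
      have e2 : γ * ((((0:ℝ)) - ρ s.1) * G' s.1) = (γ * G' s.1) * (0 - ρ s.1) := by ring
      have gtrue : g s true = ρ s.1 * Real.exp ((γ * G' s.1) * (1 - ρ s.1)) := by
        simp only [hgdef, if_true, e1]
      have gfalse : g s false = (1 - ρ s.1) * Real.exp ((γ * G' s.1) * (0 - ρ s.1)) := by
        simp only [hgdef, if_neg Bool.false_ne_true, e2]
      have hsq : G' s.1 ^ 2 ≤ M ^ 2 :=
        sq_le_sq' (by linarith [(abs_le.mp (hG' s.1)).1]) (abs_le.mp (hG' s.1)).2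
      have hexp : Real.exp ((γ * G' s.1) ^ 2 / 2) ≤ Real.exp (γ ^ 2 * M ^ 2 / 2) := by
        apply Real.exp_le_exp.mpr
        nlinarith [sq_nonneg γ]
      rw [gtrue, gfalse]
      exact le_trans hb hexp
    have step3' : ∀ s : Fin k × Fin n, 0 ≤ ∑ b : Bool, g s b := by
      intro s
      refine Finset.sum_nonneg fun b _ => ?_
      have : 0 ≤ (if b then ρ s.1 else 1 - ρ s.1) := by
        cases b <;> simp only [if_neg Bool.false_ne_true, if_true] <;>
          linarith [hρ1' s.1, hρ0' s.1]
      calc (0:ℝ) ≤ (if b then ρ s.1 else 1 - ρ s.1)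
            * Real.exp (γ * ((((if b then 1 else 0) : ℝ) - ρ s.1) * G' s.1)) :=
          mul_nonneg this (Real.exp_pos _).le
        _ = g s b := by rw [hgdef]
    calc ∑ η, q η * Real.exp (γ * Y G' η)
        = ∑ η : (Fin k × Fin n) → Bool, ∏ s, g s (η s) :=
          Finset.sum_congr rfl fun η _ => step1 η
      _ = ∏ s, ∑ b : Bool, g s b := step2
      _ ≤ ∏ s : Fin k × Fin n, Real.exp (γ ^ 2 * M ^ 2 / 2) :=
          Finset.prod_le_prod (fun s _ => step3' s) (fun s _ => step3 s)
      _ = Real.exp (γ ^ 2 * K) := by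
          rw [Finset.prod_const, Finset.card_univ, Fintype.card_prod, Fintype.card_fin,
            Fintype.card_fin, ← Real.exp_nat_mul]
          congr 1
          rw [hKdef, hNdef]
          push_cast
          ring
  set H : ℝ := ∑ η, p η * Real.log (p η / q η) with hHdef
  have hrel : relEnt μ ν = H := rfl
  have hHnn : 0 ≤ H := by
    have h0 := entropy_ineq p q (fun _ => 0) hpnn hp1 hqpos
    simpa [hq1] using h0
  have hupper := one_sided p q (Y G) hpnn hp1 hqpos hq1 K hKnn (hmgf G hG)
  have hGneg : ∀ i, |(fun i => -G i) i| ≤ M := fun i => by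
    simp only [abs_neg]; exact hG i
  have hneg : ∀ η, Y (fun i => -G i) η = -(Y G η) := by
    intro η
    rw [hYdef]
    simp only []
    rw [← Finset.sum_neg_distrib]
    exact Finset.sum_congr rfl fun s _ => by ring
  have hlower := one_sided p q (Y (fun i => -G i)) hpnn hp1 hqpos hq1 K hKnn
    (hmgf (fun i => -G i) hGneg)
  have hlower' : -(∑ η, p η * Y G η) ≤ 2 * Real.sqrt (H * K) := by
    have he : ∑ η, p η * Y (fun i => -G i) η = -(∑ η, p η * Y G η) := by
      rw [← Finset.sum_neg_distrib]
      exact Finset.sum_congr rfl fun η _ => by rw [hneg η]; ring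
    rw [he] at hlower
    exact hlower
  have habs : |∑ η, p η * Y G η| ≤ 2 * Real.sqrt (H * K) :=
    abs_le.mpr ⟨by linarith, hupper⟩
  have hint : ∫ η, (1 / N) *
      (∑ i : Fin k, ∑ j : Fin n, (((if η (i, j) then 1 else 0) : ℝ) - ρ i) * G i) ∂μ
      = (1 / N) * ∑ η, p η * Y G η := by
    rw [integral_fintype Integrable.of_finite, Finset.mul_sum]
    refine Finset.sum_congr rfl fun η _ => ?_
    rw [smul_eq_mul, Measure.real]
    have hYe : Y G η = ∑ i : Fin k, ∑ j : Fin n, (((if η (i, j) then 1 else 0) : ℝ) - ρ i) * G i := by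
      rw [hYdef]
      exact Fintype.sum_prod_type _
    rw [hYe]
    ring
  rw [hrel, hint, abs_mul, abs_of_pos (by positivity : (0:ℝ) < 1 / N)]
  have key2 : 2 * Real.sqrt (H * K) ≤ N * ((2 * M + 1) * Real.sqrt (H / N)) := by
    have e : H * K = (H / N) * (N * N * M ^ 2 / 2) := by
      rw [hKdef]; field_simp
    rw [e, Real.sqrt_mul (div_nonneg hHnn hNpos.le)]
    have h1 : Real.sqrt (N * N * M ^ 2 / 2) ≤ N * M := by
      have h2 : N * N * M ^ 2 / 2 ≤ (N * M) ^ 2 := by nlinarith [sq_nonneg (N * M)]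
      calc Real.sqrt (N * N * M ^ 2 / 2) ≤ Real.sqrt ((N * M) ^ 2) := Real.sqrt_le_sqrt h2
        _ = N * M := Real.sqrt_sq (by positivity)
    have hs := Real.sqrt_nonneg (H / N)
    nlinarith [mul_le_mul_of_nonneg_left h1 hs]
  calc (1 / N) * |∑ η, p η * Y G η|
      ≤ (1 / N) * (2 * Real.sqrt (H * K)) := by
        apply mul_le_mul_of_nonneg_left habs (by positivity)
    _ ≤ (1 / N) * (N * ((2 * M + 1) * Real.sqrt (H / N))) :=
        mul_le_mul_of_nonneg_left key2 (by positivity)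
    _ = (2 * M + 1) * Real.sqrt (H / N) := by
        field_simp
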